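/- arXiv:1311.6959 — 5 statements merged into one kernel-verified Lean document; each statement's English description precedes it below -/
import Mathlib

section
/- For γ ∈ (0, π), the integral of K(λ|γ) = sin(2γ)/(2π(sinh²λ + sin²γ)) over λ ∈ ℝ equals 1 − 2γ/π. -/
open MeasureTheory Real Filter Topology

noncomputable def K (lam γ : ℝ) : ℝ :=
  Real.sin (2 * γ) / (2 * Real.pi * (Real.sinh lam ^ 2 + Real.sin γ ^ 2))

lemma tendsto_tanh_atTop : Tendsto (fun x : ℝ => Real.sinh x / Real.cosh x) atTop (𝓝 1) := by
  have h : ∀ x : ℝ, Real.sinh x / Real.cosh x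
      = (1 - Real.exp (-(2*x))) / (1 + Real.exp (-(2*x))) := by
    intro x
    have hx : (0:ℝ) < Real.exp x := Real.exp_pos x
    have h2x : Real.exp (-(2*x)) = (Real.exp x)⁻¹ * (Real.exp x)⁻¹ := by
      rw [← Real.exp_neg, ← Real.exp_add]; ring_nf
    rw [Real.sinh_eq, Real.cosh_eq, h2x, Real.exp_neg]
    have hxne : Real.exp x ≠ 0 := hx.ne'
    rw [div_eq_div_iff (by positivity) (by positivity)]
    field_simp
  simp only [h]
  have h2 : Tendsto (fun x : ℝ => Real.exp (-(2*x))) atTop (𝓝 0) := by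
    apply Real.tendsto_exp_atBot.comp
    apply tendsto_neg_atBot_iff.mpr
    exact Tendsto.const_mul_atTop two_pos tendsto_id
  have hd : Tendsto (fun x : ℝ => (1 - Real.exp (-(2*x))) / (1 + Real.exp (-(2*x)))) atTop
      (𝓝 ((1 - 0) / (1 + 0))) :=
    Tendsto.div (tendsto_const_nhds.sub h2) (tendsto_const_nhds.add h2) (by norm_num)
  simpa using hd

lemma tendsto_tanh_atBot : Tendsto (fun x : ℝ => Real.sinh x / Real.cosh x) atBot (𝓝 (-1)) := by
  have := (tendsto_tanh_atTop.comp tendsto_neg_atBot_atTop).neg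
  simp only [Function.comp, Real.sinh_neg, Real.cosh_neg, neg_div, neg_neg] at this
  simpa using this

theorem stmt_3 (γ : ℝ) (hγ : γ ∈ Set.Ioo 0 Real.pi) :
    ∫ lam : ℝ, K lam γ = 1 - 2 * γ / Real.pi := by
  obtain ⟨hγ0, hγπ⟩ := hγ
  have hs : 0 < Real.sin γ := Real.sin_pos_of_pos_of_lt_pi hγ0 hγπ
  set a : ℝ := Real.cos γ / Real.sin γ with ha
  set F : ℝ → ℝ := fun x => Real.arctan (a * (Real.sinh x / Real.cosh x)) / Real.pi with hF
  have hcosh : ∀ x : ℝ, Real.cosh x ≠ 0 := fun x => (Real.cosh_pos (x := x)).ne'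
  have hπ : (0:ℝ) < Real.pi := Real.pi_pos
  have hden : ∀ x : ℝ, 0 < Real.sinh x ^ 2 + Real.sin γ ^ 2 := fun x => by positivity
  have hsc : Real.sin γ ^ 2 + Real.cos γ ^ 2 = 1 := Real.sin_sq_add_cos_sq γ
  -- derivative
  have hderiv : ∀ x : ℝ, HasDerivAt F (K x γ) x := by
    intro x
    have h11 : Real.cosh x * Real.cosh x - Real.sinh x * Real.sinh x = 1 := by
      have h := Real.cosh_sq_sub_sinh_sq x; nlinarith
    have h1 : HasDerivAt (fun x : ℝ => Real.sinh x / Real.cosh x)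
        ((Real.cosh x * Real.cosh x - Real.sinh x * Real.sinh x) / Real.cosh x ^ 2) x :=
      (Real.hasDerivAt_sinh x).div (Real.hasDerivAt_cosh x) (hcosh x)
    rw [h11] at h1
    have h2 := ((Real.hasDerivAt_arctan (a * (Real.sinh x / Real.cosh x))).comp x
      (h1.const_mul a)).div_const Real.pi
    convert h2 using 1
    case e'_4 => rfl
    case e'_5 => rfl
    case e'_8 => rfl
    have hc2 : Real.cosh x ^ 2 = Real.sinh x ^ 2 + 1 := by
      have := Real.cosh_sq_sub_sinh_sq x; linarith
    have key : 1 / (1 + (a * (Real.sinh x / Real.cosh x)) ^ 2)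
        * (a * (1 / Real.cosh x ^ 2)) / Real.pi
        = a / (Real.pi * (Real.cosh x ^ 2 + a ^ 2 * Real.sinh x ^ 2)) := by
      have hccc : (0:ℝ) < Real.cosh x ^ 2 := by positivity
      field_simp
    rw [K, Real.sin_two_mul, key, hc2, ha]
    rw [div_eq_div_iff (by positivity) (by positivity)]
    field_simp
    linear_combination (Real.cos γ * Real.sinh x ^ 2) * hsc
  -- integrability
  have hInt : Integrable (fun x => K x γ) := by
    have hg : Integrable (fun x : ℝ =>
        (|Real.sin (2*γ)| / (2 * Real.pi * Real.sin γ ^ 2)) * (1 + x ^ 2)⁻¹) :=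
      integrable_inv_one_add_sq.const_mul _
    apply hg.mono'
    · apply Continuous.aestronglyMeasurable
      apply Continuous.div continuous_const
      · continuity
      · intro x
        have := hden x; positivity
    · filter_upwards with x
      have hsq : x ^ 2 ≤ Real.sinh x ^ 2 := by
        rcases le_or_gt 0 x with h | h
        · have h1 := Real.self_le_sinh_iff.mpr h
          nlinarith [Real.sinh_nonneg_iff.mpr h]
        · have h' : (0:ℝ) ≤ -x := le_of_lt (by linarith)
          have h1 := Real.self_le_sinh_iff.mpr h'
          rw [Real.sinh_neg] at h1
          nlinarith [Real.sinh_nonneg_iff.mpr h']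
      have hsin1 : Real.sin γ ^ 2 ≤ 1 := by nlinarith [sq_nonneg (Real.cos γ)]
      have hkey : Real.sin γ ^ 2 * x ^ 2 ≤ Real.sinh x ^ 2 := by nlinarith
      have hrhs : |Real.sin (2*γ)| / (2 * Real.pi * Real.sin γ ^ 2) * (1 + x ^ 2)⁻¹
          = |Real.sin (2*γ)| / (2 * Real.pi * Real.sin γ ^ 2 * (1 + x ^ 2)) := by
        have h1 : (1:ℝ) + x ^ 2 ≠ 0 := by positivity
        have h2 : Real.sin γ ≠ 0 := hs.ne'
        field_simp
      rw [K, Real.norm_eq_abs, abs_div, abs_of_pos (by have := hden x; positivity :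
        (0:ℝ) < 2 * Real.pi * (Real.sinh x ^ 2 + Real.sin γ ^ 2)), hrhs]
      apply div_le_div_of_nonneg_left (abs_nonneg _) (by positivity)
      nlinarith [hden x]
  -- limits
  have htop : Tendsto F atTop (𝓝 (Real.arctan a / Real.pi)) := by
    apply Tendsto.div_const
    exact (Real.continuous_arctan.tendsto _).comp
      (by simpa using tendsto_tanh_atTop.const_mul a)
  have hbot : Tendsto F atBot (𝓝 (Real.arctan (-a) / Real.pi)) := by
    apply Tendsto.div_const
    have := (Real.continuous_arctan.tendsto (a * (-1))).comp
      (tendsto_tanh_atBot.const_mul a)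
    simpa [mul_comm, Function.comp_def] using this
  have hI := integral_of_hasDerivAt_of_tendsto hderiv hInt hbot htop
  rw [hI]
  have htan : a = Real.tan (Real.pi / 2 - γ) := by
    rw [Real.tan_eq_sin_div_cos, Real.sin_pi_div_two_sub, Real.cos_pi_div_two_sub, ha]
  have harctan : Real.arctan a = Real.pi / 2 - γ := by
    rw [htan]
    exact Real.arctan_tan (by linarith) (by linarith)
  rw [Real.arctan_neg, harctan]
  field_simp
  ring
end

section
/- For γ ∈ (0, π) and any real Q > 0, the integral operator f ↦ (λ ↦ ∫_{−Q}^{Q} K(λ−μ|γ) f(μ) dμ) on continuous functions on [−Q, Q], equipped with the sup norm, has operator norm at most |1 − 2γ/π| < 1; consequently I + K is invertible on C⁰([−Q, Q]). -/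
open MeasureTheory

namespace Stmt4Aux

lemma K_cont (γ : ℝ) (hs : 0 < Real.sin γ) : Continuous (fun t => K t γ) := by
  apply Continuous.div continuous_const (by fun_prop)
  intro t
  have h1 : 0 < Real.sinh t ^ 2 + Real.sin γ ^ 2 := by positivity
  have := Real.pi_pos
  positivity

noncomputable def F (γ t : ℝ) : ℝ := Real.arctan (Real.tanh t * (Real.cos γ / Real.sin γ))

lemma hasDerivAt_tanh (t : ℝ) : HasDerivAt Real.tanh (1 / Real.cosh t ^ 2) t := by
  have hc : Real.cosh t ≠ 0 := (Real.cosh_pos t).ne'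
  have h := (Real.hasDerivAt_sinh t).div (Real.hasDerivAt_cosh t) hc
  have heq : (Real.cosh t * Real.cosh t - Real.sinh t * Real.sinh t) / Real.cosh t ^ 2
      = 1 / Real.cosh t ^ 2 := by
    rw [show Real.cosh t * Real.cosh t - Real.sinh t * Real.sinh t
        = Real.cosh t ^ 2 - Real.sinh t ^ 2 by ring, Real.cosh_sq_sub_sinh_sq]
  rw [heq] at h
  have hfun : Real.tanh = fun x => Real.sinh x / Real.cosh x :=
    funext fun x => Real.tanh_eq_sinh_div_cosh x
  rw [hfun]
  exact h

lemma hasDerivAt_F (γ : ℝ) (hs : 0 < Real.sin γ) (t : ℝ) :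
    HasDerivAt (F γ) (Real.pi * K t γ) t := by
  have h := ((hasDerivAt_tanh t).mul_const (Real.cos γ / Real.sin γ)).arctan
  convert h using 1
  · rfl
  have hc : (0:ℝ) < Real.cosh t := Real.cosh_pos t
  have hd : 0 < Real.sinh t ^ 2 + Real.sin γ ^ 2 := by positivity
  have hpi := Real.pi_pos
  have hcs : Real.cosh t ^ 2 = Real.sinh t ^ 2 + 1 := Real.cosh_sq t
  unfold K
  rw [Real.sin_two_mul, Real.tanh_eq_sinh_div_cosh]
  field_simp
  linear_combination (Real.cos γ*Real.sinh t^2) *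
      Real.sin_sq_add_cos_sq γ +
    (Real.cos γ*Real.sin γ^2) * hcs

lemma abs_tanh_le_one (t : ℝ) : |Real.tanh t| ≤ 1 := by
  have hc : (0:ℝ) < Real.cosh t := Real.cosh_pos t
  rw [Real.tanh_eq_sinh_div_cosh, abs_div, abs_of_pos hc, div_le_one hc]
  have := Real.cosh_sq t
  nlinarith [abs_nonneg (Real.sinh t), sq_abs (Real.sinh t)]

lemma abs_arctan (u : ℝ) : |Real.arctan u| = Real.arctan |u| := by
  rcases le_or_gt 0 u with h | h
  · rw [abs_of_nonneg h, abs_of_nonneg]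
    have := Real.arctan_strictMono.monotone h
    simpa using this
  · rw [abs_of_neg h, abs_of_neg, ← Real.arctan_neg]
    have := Real.arctan_strictMono h
    simpa using this

lemma abs_F_le (γ : ℝ) (hγ1 : 0 < γ) (hγ2 : γ < Real.pi) (t : ℝ) :
    |F γ t| ≤ |Real.pi / 2 - γ| := by
  have hs : 0 < Real.sin γ := Real.sin_pos_of_pos_of_lt_pi hγ1 hγ2
  have harct : Real.arctan (Real.cos γ / Real.sin γ) = Real.pi / 2 - γ := by
    have h1 : Real.tan (Real.pi / 2 - γ) = Real.cos γ / Real.sin γ := by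
      rw [Real.tan_eq_sin_div_cos, Real.sin_pi_div_two_sub, Real.cos_pi_div_two_sub]
    rw [← h1, Real.arctan_tan (by linarith) (by linarith)]
  have key : |F γ t| ≤ |Real.arctan (Real.cos γ / Real.sin γ)| := by
    rw [F, abs_arctan, abs_arctan]
    apply Real.arctan_strictMono.monotone
    rw [abs_mul]
    calc |Real.tanh t| * |Real.cos γ / Real.sin γ|
        ≤ 1 * |Real.cos γ / Real.sin γ| :=
          mul_le_mul_of_nonneg_right (abs_tanh_le_one t) (abs_nonneg _)
      _ = |Real.cos γ / Real.sin γ| := one_mul _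
  rwa [harct] at key

lemma K_interval_integral (γ : ℝ) (hs : 0 < Real.sin γ) (a b : ℝ) :
    ∫ t in a..b, K t γ = (F γ b - F γ a) / Real.pi := by
  have hpi : Real.pi ≠ 0 := Real.pi_ne_zero
  have h := intervalIntegral.integral_eq_sub_of_hasDerivAt
    (f := F γ) (f' := fun t => Real.pi * K t γ)
    (fun t _ => hasDerivAt_F γ hs t)
    (Continuous.intervalIntegrable (continuous_const.mul (K_cont γ hs)) a b)
  rw [intervalIntegral.integral_const_mul] at h
  rw [eq_div_iff hpi]
  linarith [h]

lemma K_abs_bound (γ : ℝ) (hγ1 : 0 < γ) (hγ2 : γ < Real.pi) (a b : ℝ) :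
    ∫ t in a..b, |K t γ| ≤ |1 - 2 * γ / Real.pi| := by
  have hs : 0 < Real.sin γ := Real.sin_pos_of_pos_of_lt_pi hγ1 hγ2
  have hpi := Real.pi_pos
  have habs_eq : |1 - 2 * γ / Real.pi| = 2 * |Real.pi / 2 - γ| / Real.pi := by
    rw [show (1:ℝ) - 2 * γ / Real.pi = 2 * (Real.pi/2 - γ) / Real.pi by field_simp,
      abs_div, abs_mul, abs_of_pos hpi]
    norm_num
  have hFb := abs_F_le γ hγ1 hγ2 b
  have hFa := abs_F_le γ hγ1 hγ2 a
  have habF : F γ b - F γ a ≤ 2 * |Real.pi / 2 - γ| ∧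
      -(2 * |Real.pi / 2 - γ|) ≤ F γ b - F γ a := by
    constructor <;>
    · have h2 := le_abs_self (F γ b); have h3 := neg_abs_le (F γ b)
      have h4 := le_abs_self (F γ a); have h5 := neg_abs_le (F γ a)
      linarith
  rcases le_or_gt 0 (Real.cos γ) with hc | hc
  · have hK : ∀ t, |K t γ| = K t γ := by
      intro t
      apply abs_of_nonneg
      unfold K
      have hd : 0 < Real.sinh t ^ 2 + Real.sin γ ^ 2 := by positivity
      have : 0 ≤ Real.sin (2*γ) := by rw [Real.sin_two_mul]; positivity
      positivity
    simp only [hK]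
    rw [K_interval_integral γ hs a b, habs_eq, div_le_div_iff_of_pos_right hpi]
    exact habF.1
  · have hK : ∀ t, |K t γ| = -(K t γ) := by
      intro t
      apply abs_of_nonpos
      unfold K
      have hd : 0 < Real.sinh t ^ 2 + Real.sin γ ^ 2 := by positivity
      have : Real.sin (2*γ) ≤ 0 := by rw [Real.sin_two_mul]; nlinarith
      exact div_nonpos_of_nonpos_of_nonneg this (by positivity)
    simp only [hK]
    rw [intervalIntegral.integral_neg, K_interval_integral γ hs a b, habs_eq,
      show -((F γ b - F γ a) / Real.pi) = (F γ a - F γ b) / Real.pi by ring,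
      div_le_div_iff_of_pos_right hpi]
    linarith [habF.2]

end Stmt4Aux

theorem stmt_4 (γ Q : ℝ) (hγ : γ ∈ Set.Ioo 0 Real.pi) (hQ : 0 < Q)
    (T : C(Set.Icc (-Q) Q, ℝ) →L[ℝ] C(Set.Icc (-Q) Q, ℝ))
    (hT : ∀ (f : C(Set.Icc (-Q) Q, ℝ)) (g : ℝ → ℝ),
      (∀ x : Set.Icc (-Q) Q, g x = f x) →
      ∀ x : Set.Icc (-Q) Q,
        T f x = ∫ μ in Set.Icc (-Q) Q, K ((x : ℝ) - μ) γ * g μ) :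
    ‖T‖ ≤ |1 - 2 * γ / Real.pi| ∧ |1 - 2 * γ / Real.pi| < 1 ∧
    IsUnit ((1 : C(Set.Icc (-Q) Q, ℝ) →L[ℝ] C(Set.Icc (-Q) Q, ℝ)) + T) := by
  obtain ⟨hγ1, hγ2⟩ := hγ
  have hpi := Real.pi_pos
  have hs : 0 < Real.sin γ := Real.sin_pos_of_pos_of_lt_pi hγ1 hγ2
  set M : ℝ := |1 - 2 * γ / Real.pi| with hM
  have hM0 : 0 ≤ M := abs_nonneg _
  have hQQ : (-Q : ℝ) ≤ Q := by linarith
  have hlt : M < 1 := by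
    rw [hM, abs_lt]
    have h1 : 0 < 2 * γ / Real.pi := by positivity
    have h2 : 2 * γ / Real.pi < 2 := by
      rw [div_lt_iff₀ hpi]; linarith
    constructor <;> linarith
  have hbound : ‖T‖ ≤ M := by
    apply ContinuousLinearMap.opNorm_le_bound T hM0
    intro f
    set g : ℝ → ℝ := Set.IccExtend hQQ f with hg
    have hgf : ∀ x : Set.Icc (-Q) Q, g x = f x := fun x => Set.IccExtend_val hQQ f x
    have hgc : Continuous g := (map_continuous f).Icc_extend'
    have hgle : ∀ μ : ℝ, |g μ| ≤ ‖f‖ := by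
      intro μ
      rw [hg, Set.IccExtend_apply]
      exact f.norm_coe_le_norm _
    have key : ∀ x : Set.Icc (-Q) Q, ‖T f x‖ ≤ M * ‖f‖ := by
      intro x
      rw [hT f g hgf x]
      have hKc : Continuous (fun μ : ℝ => K ((x:ℝ) - μ) γ) :=
        (Stmt4Aux.K_cont γ hs).comp (continuous_const.sub continuous_id)
      have hint1 : IntegrableOn (fun μ => K ((x:ℝ) - μ) γ * g μ) (Set.Icc (-Q) Q) :=
        (hKc.mul hgc).integrableOn_Icc
      have hint2 : IntegrableOn (fun μ => |K ((x:ℝ) - μ) γ| * ‖f‖) (Set.Icc (-Q) Q) :=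
        (hKc.abs.mul continuous_const).integrableOn_Icc
      calc ‖∫ μ in Set.Icc (-Q) Q, K ((x:ℝ) - μ) γ * g μ‖
          ≤ ∫ μ in Set.Icc (-Q) Q, ‖K ((x:ℝ) - μ) γ * g μ‖ :=
            norm_integral_le_integral_norm _
        _ ≤ ∫ μ in Set.Icc (-Q) Q, |K ((x:ℝ) - μ) γ| * ‖f‖ := by
            apply setIntegral_mono_on hint1.norm hint2 measurableSet_Icc
            intro μ _
            rw [Real.norm_eq_abs, abs_mul]
            exact mul_le_mul_of_nonneg_left (hgle μ) (abs_nonneg _)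
        _ = (∫ μ in Set.Icc (-Q) Q, |K ((x:ℝ) - μ) γ|) * ‖f‖ := integral_mul_const _ _
        _ ≤ M * ‖f‖ := by
            apply mul_le_mul_of_nonneg_right _ (norm_nonneg f)
            have heq : ∫ μ in Set.Icc (-Q) Q, |K ((x:ℝ) - μ) γ|
                = ∫ t in (x:ℝ) - Q..(x:ℝ) + Q, |K t γ| := by
              rw [MeasureTheory.integral_Icc_eq_integral_Ioc,
                ← intervalIntegral.integral_of_le hQQ]
              have := intervalIntegral.integral_comp_sub_left
                (a := -Q) (b := Q) (fun t => |K t γ|) (x : ℝ)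
              rw [this]
              norm_num
            rw [heq, hM]
            exact Stmt4Aux.K_abs_bound γ hγ1 hγ2 _ _
    have hnn : Nonempty (Set.Icc (-Q) Q) := ⟨⟨0, by constructor <;> linarith⟩⟩
    rw [ContinuousMap.norm_le _ (by positivity)]
    exact key
  refine ⟨hbound, hlt, ?_⟩
  have hTn : ‖-T‖ < 1 := by
    have hnn : ‖-T‖ = ‖T‖ := norm_neg T
    rw [hnn]; exact lt_of_le_of_lt hbound hlt
  have := (Units.oneSub (-T) hTn).isUnit
  simpa [sub_neg_eq_add] using this
end

section
/- For γ ∈ (0, π/2), the function R(λ) = (π/(2γ(π − γ))) ∫_ℝ K(μ/(1 − γ/π) | γ') / cosh(π(λ − μ)/γ) dμ, with γ' = (γ/2)/(1 − γ/π), is even in λ, strictly positive on ℝ, strictly monotonically decreasing on (0, ∞), and tends to 0 as λ → ∞. -/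
open MeasureTheory

noncomputable def Rconv (γ : ℝ) (lam : ℝ) : ℝ :=
  Real.pi / (2 * γ * (Real.pi - γ)) *
    ∫ μ : ℝ, K (μ / (1 - γ / Real.pi)) ((γ / 2) / (1 - γ / Real.pi)) /
      Real.cosh (Real.pi * (lam - μ) / γ)

open Filter Set Real

section Aux

lemma refl_integral (c : ℝ) (F : ℝ → ℝ) : (∫ t : ℝ, F (c - t)) = ∫ t : ℝ, F t :=
  (Measure.measurePreserving_sub_left (volume : Measure ℝ) c).integral_comp
    (MeasurableEquiv.subLeft c).measurableEmbedding F

lemma refl_setIntegral (c : ℝ) (F : ℝ → ℝ) (s : Set ℝ) :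
    (∫ t in (fun t : ℝ => c - t) ⁻¹' s, F (c - t)) = ∫ t in s, F t :=
  (Measure.measurePreserving_sub_left (volume : Measure ℝ) c).setIntegral_preimage_emb
    (MeasurableEquiv.subLeft c).measurableEmbedding F s

lemma integrable_refl (c : ℝ) {F : ℝ → ℝ} (hF : Integrable F) :
    Integrable (fun t => F (c - t)) :=
  ((Measure.measurePreserving_sub_left (volume : Measure ℝ) c).integrable_comp_emb
    (MeasurableEquiv.subLeft c).measurableEmbedding).mpr hF

lemma conv_aux (f g : ℝ → ℝ) (hfc : Continuous f) (hgc : Continuous g)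
    (hfe : ∀ x : ℝ, f (-x) = f x) (hge : ∀ x : ℝ, g (-x) = g x)
    (hfm : ∀ x y : ℝ, |x| < |y| → f y < f x)
    (hgm : ∀ x y : ℝ, |x| < |y| → g y < g x)
    (hfp : ∀ x, 0 < f x) (hgp : ∀ x, 0 < g x) (hg1 : ∀ x, g x ≤ 1)
    (hfi : Integrable f)
    (hg0 : Tendsto g atTop (nhds 0)) :
    (∀ lam : ℝ, (∫ μ : ℝ, f μ * g (-lam - μ)) = ∫ μ : ℝ, f μ * g (lam - μ)) ∧
    (∀ lam : ℝ, 0 < ∫ μ : ℝ, f μ * g (lam - μ)) ∧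
    (∀ a b : ℝ, 0 < a → a < b →
      (∫ μ : ℝ, f μ * g (b - μ)) < ∫ μ : ℝ, f μ * g (a - μ)) ∧
    Tendsto (fun lam => ∫ μ : ℝ, f μ * g (lam - μ)) atTop (nhds 0) := by
  have gabs : ∀ t, |g t| ≤ 1 := fun t => by
    rw [abs_of_pos (hgp t)]; exact hg1 t
  -- generic integrability of products
  have intGen : ∀ (F G : ℝ → ℝ), Integrable F → Continuous F → Continuous G →
      (∀ t, |G t| ≤ 1) → Integrable (fun t => F t * G t) := by
    intro F G hFi hFc hGc hG1
    refine hFi.norm.mono' ((hFc.mul hGc).aestronglyMeasurable) (ae_of_all _ fun t => ?_)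
    simp only [Real.norm_eq_abs, abs_mul]
    have h1 := hG1 t
    have h2 := abs_nonneg (F t)
    have h3 := abs_nonneg (G t)
    nlinarith
  have i1 : ∀ lam : ℝ, Integrable (fun μ => f μ * g (lam - μ)) := fun lam =>
    intGen f _ hfi hfc (hgc.comp (continuous_const.sub continuous_id)) (fun t => gabs _)
  have i2 : ∀ c : ℝ, Integrable (fun t => f (c - t) * g t) := fun c =>
    intGen _ g (integrable_refl c hfi) (hfc.comp (continuous_const.sub continuous_id)) hgc gabs
  have i3 : ∀ c d : ℝ, Integrable (fun t => f (c - t) * g (d - t)) := fun c d =>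
    intGen _ _ (integrable_refl c hfi) (hfc.comp (continuous_const.sub continuous_id))
      (hgc.comp (continuous_const.sub continuous_id)) (fun t => gabs _)
  refine ⟨?_, ?_, ?_, ?_⟩
  · -- evenness
    intro lam
    have h := refl_integral 0 (fun μ => f μ * g (-lam - μ))
    calc (∫ μ : ℝ, f μ * g (-lam - μ))
        = ∫ t : ℝ, f (0 - t) * g (-lam - (0 - t)) := h.symm
      _ = ∫ μ : ℝ, f μ * g (lam - μ) := by
          refine integral_congr_ae (ae_of_all _ fun t => ?_)
          show f (0 - t) * g (-lam - (0 - t)) = f t * g (lam - t)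
          have e1 : (0 : ℝ) - t = -t := by ring
          rw [e1, hfe]
          have e2 : -lam - -t = -(lam - t) := by ring
          rw [e2, hge]
  · -- positivity
    intro lam
    rw [integral_pos_iff_support_of_nonneg
      (fun μ => mul_nonneg (hfp μ).le (hgp _).le) (i1 lam)]
    have hsupp : Function.support (fun μ => f μ * g (lam - μ)) = Set.univ := by
      ext μ
      simp only [Function.mem_support, Set.mem_univ, iff_true]
      exact (mul_pos (hfp μ) (hgp _)).ne'
    rw [hsupp]
    simp
  · -- strict antitonicity
    intro a b ha hab
    set m : ℝ := (a + b) / 2 with hm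
    have hm0 : 0 < m := by simp only [hm]; linarith
    have swap : ∀ lam : ℝ, (∫ μ : ℝ, f μ * g (lam - μ)) = ∫ t : ℝ, f (lam - t) * g t := by
      intro lam
      rw [← refl_integral lam (fun μ => f μ * g (lam - μ))]
      refine integral_congr_ae (ae_of_all _ fun t => ?_)
      simp only [sub_sub_cancel]
    rw [swap a, swap b, ← sub_pos, ← integral_sub (i2 a) (i2 b)]
    set φ : ℝ → ℝ := fun t => f (a - t) * g t - f (b - t) * g t with hφ
    set ψ : ℝ → ℝ := fun t => f (b - t) * g (2 * m - t) - f (a - t) * g (2 * m - t) with hψ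
    have hφi : Integrable φ := (i2 a).sub (i2 b)
    have hψi : Integrable ψ := (i3 b (2 * m)).sub (i3 a (2 * m))
    have hφ2 : ∀ t : ℝ, φ (2 * m - t) = ψ t := by
      intro t
      have h1 : a - (2 * m - t) = -(b - t) := by simp only [hm]; ring
      have h2 : b - (2 * m - t) = -(a - t) := by simp only [hm]; ring
      simp only [hφ, hψ, h1, h2, hfe]
    have hsplit : (∫ t : ℝ, φ t) = (∫ t in Iio m, φ t) + ∫ t in Ioi m, φ t := by
      rw [← intervalIntegral.integral_Iic_add_Ioi hφi.integrableOn hφi.integrableOn,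
        integral_Iic_eq_integral_Iio]
    have hpre : (fun t : ℝ => 2 * m - t) ⁻¹' (Ioi m) = Iio m := by
      ext t
      simp only [Set.mem_preimage, Set.mem_Ioi, Set.mem_Iio]
      constructor <;> intro h <;> linarith
    have hrefl : (∫ t in Ioi m, φ t) = ∫ t in Iio m, ψ t := by
      rw [← refl_setIntegral (2 * m) φ (Ioi m), hpre]
      exact setIntegral_congr_ae measurableSet_Iio (ae_of_all _ fun t _ => hφ2 t)
    set χ : ℝ → ℝ := fun t => (f (a - t) - f (b - t)) * (g t - g (2 * m - t)) with hχ
    have hχeq : ∀ t : ℝ, φ t + ψ t = χ t := by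
      intro t; simp only [hφ, hψ, hχ]; ring
    have hχi : Integrable χ :=
      (hφi.add hψi).congr (ae_of_all _ fun t => hχeq t)
    have hcomb : (∫ t : ℝ, φ t) = ∫ t in Iio m, χ t := by
      rw [hsplit, hrefl, ← integral_add hφi.integrableOn hψi.integrableOn]
      exact setIntegral_congr_ae measurableSet_Iio (ae_of_all _ fun t _ => hχeq t)
    rw [hcomb]
    have hχpos : ∀ t ∈ Iio m, 0 < χ t := by
      intro t ht
      simp only [Set.mem_Iio] at ht
      have hbm : b - m = (b - a) / 2 := by simp only [hm]; ring
      have hbt : 0 < b - t := by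
        have : m < b := by simp only [hm]; linarith
        linarith
      have h1 : |a - t| < |b - t| := by
        rw [abs_of_pos hbt, abs_lt]
        constructor <;> simp only [hm] at ht ⊢ <;> linarith
      have h2 : |t| < |2 * m - t| := by
        have h2m : 0 < 2 * m - t := by linarith
        rw [abs_of_pos h2m, abs_lt]
        constructor <;> linarith
      exact mul_pos (sub_pos.mpr (hfm _ _ h1)) (sub_pos.mpr (hgm _ _ h2))
    refine (setIntegral_pos_iff_support_of_nonneg_ae ?_ hχi.integrableOn).mpr ?_
    · refine (ae_restrict_iff' measurableSet_Iio).mpr (ae_of_all _ fun t ht => ?_)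
      exact (hχpos t ht).le
    · have hsub : Function.support χ ∩ Iio m = Iio m :=
        Set.inter_eq_right.mpr (fun t ht => (hχpos t ht).ne')
      rw [hsub, Real.volume_Iio]
      exact ENNReal.zero_lt_top
  · -- tendsto 0
    have h0 : (0 : ℝ) = ∫ _ : ℝ, (0 : ℝ) := by simp
    rw [h0]
    refine tendsto_integral_filter_of_dominated_convergence f
      (Eventually.of_forall fun lam =>
        ((hfc.mul (hgc.comp (continuous_const.sub continuous_id))).aestronglyMeasurable))
      (Eventually.of_forall fun lam => (ae_of_all _ fun μ => ?_)) hfi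
      (ae_of_all _ fun μ => ?_)
    · simp only [Real.norm_eq_abs, abs_mul]
      have h1 := gabs (lam - μ)
      have h2 := abs_nonneg (f μ)
      have h3 := abs_nonneg (g (lam - μ))
      have h4 : |f μ| = f μ := abs_of_pos (hfp μ)
      nlinarith
    · have h1 : Tendsto (fun lam : ℝ => lam - μ) atTop atTop := by
        simpa [sub_eq_add_neg] using tendsto_atTop_add_const_right atTop (-μ) tendsto_id
      have h2 := (hg0.comp h1).const_mul (f μ)
      simpa using h2

lemma sq_le_sinh_sq (z : ℝ) : z ^ 2 ≤ Real.sinh z ^ 2 := by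
  rcases le_or_gt 0 z with h | h
  · nlinarith [Real.self_le_sinh_iff.mpr h]
  · have h1 : Real.sinh (-z) = -Real.sinh z := Real.sinh_neg z
    nlinarith [Real.self_le_sinh_iff.mpr (neg_nonneg.mpr h.le)]

lemma Kf_props (c γ' : ℝ) (hc0 : 0 < c) (hc1 : c ≤ 1) (h0 : 0 < γ')
    (h2 : γ' < Real.pi / 2) :
    Continuous (fun μ : ℝ => K (μ / c) γ') ∧
    (∀ x : ℝ, K (-x / c) γ' = K (x / c) γ') ∧
    (∀ x y : ℝ, |x| < |y| → K (y / c) γ' < K (x / c) γ') ∧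
    (∀ x : ℝ, 0 < K (x / c) γ') ∧
    Integrable (fun μ : ℝ => K (μ / c) γ') := by
  have hπ := Real.pi_pos
  have hS : 0 < Real.sin (2 * γ') :=
    Real.sin_pos_of_pos_of_lt_pi (by linarith) (by linarith)
  have hs : 0 < Real.sin γ' :=
    Real.sin_pos_of_pos_of_lt_pi h0 (by linarith)
  have hs1 : Real.sin γ' ≤ 1 := Real.sin_le_one _
  have hden : ∀ z : ℝ, 0 < 2 * Real.pi * (Real.sinh z ^ 2 + Real.sin γ' ^ 2) := by
    intro z
    have := sq_nonneg (Real.sinh z)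
    have := pow_pos hs 2
    nlinarith
  have hcont : Continuous (fun μ : ℝ => K (μ / c) γ') := by
    simp only [K]
    refine continuous_const.div ?_ (fun μ => (hden (μ / c)).ne')
    fun_prop
  have hpos : ∀ x : ℝ, 0 < K (x / c) γ' := fun x => div_pos hS (hden _)
  have hmono : ∀ x y : ℝ, |x| < |y| → K (y / c) γ' < K (x / c) γ' := by
    intro x y h
    have hxy : |x / c| < |y / c| := by
      rw [abs_div, abs_div, abs_of_pos hc0]
      exact div_lt_div_of_pos_right h hc0
    have hcosh := Real.cosh_lt_cosh.mpr hxy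
    have h1 : Real.sinh (x / c) ^ 2 < Real.sinh (y / c) ^ 2 := by
      have e1 := Real.cosh_sq (x / c)
      have e2 := Real.cosh_sq (y / c)
      nlinarith [Real.one_le_cosh (x / c), Real.one_le_cosh (y / c)]
    simp only [K]
    apply div_lt_div_of_pos_left hS (hden (x / c))
    nlinarith
  refine ⟨hcont, ?_, hmono, hpos, ?_⟩
  · intro x
    simp only [K, neg_div, Real.sinh_neg, neg_sq]
  · -- integrability
    set C : ℝ := Real.sin (2 * γ') / (2 * Real.pi * Real.sin γ' ^ 2) with hC
    have hbound : ∀ μ : ℝ, |K (μ / c) γ'| ≤ C * (1 + μ ^ 2)⁻¹ := by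
      intro μ
      rw [abs_of_pos (hpos μ)]
      have hsinh : μ ^ 2 ≤ Real.sinh (μ / c) ^ 2 := by
        have h1 : μ ^ 2 ≤ (μ / c) ^ 2 := by
          have hcs : c ^ 2 ≤ 1 := by nlinarith
          rw [div_pow, le_div_iff₀ (by positivity)]
          nlinarith [sq_nonneg μ]
        exact h1.trans (sq_le_sinh_sq _)
      have key : Real.sin γ' ^ 2 * (1 + μ ^ 2) ≤
          Real.sinh (μ / c) ^ 2 + Real.sin γ' ^ 2 := by
        nlinarith [mul_nonneg (by nlinarith : (0:ℝ) ≤ 1 - Real.sin γ' ^ 2) (sq_nonneg μ), hsinh]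
      have h1 : K (μ / c) γ' ≤
          Real.sin (2 * γ') / (2 * Real.pi * (Real.sin γ' ^ 2 * (1 + μ ^ 2))) := by
        simp only [K]
        apply div_le_div_of_nonneg_left hS.le
          (mul_pos (by positivity) (mul_pos (pow_pos hs 2) (by positivity)))
        nlinarith [key, Real.pi_pos]
      refine h1.trans_eq ?_
      rw [hC, ← div_eq_mul_inv, div_div, ← mul_assoc]
    refine ((integrable_inv_one_add_sq.const_mul C).mono'
      hcont.aestronglyMeasurable (ae_of_all _ fun μ => ?_))
    rw [Real.norm_eq_abs]
    exact hbound μ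

end Aux

theorem stmt_11 (γ : ℝ) (hγ : γ ∈ Set.Ioo 0 (Real.pi / 2)) :
    (∀ lam : ℝ, Rconv γ (-lam) = Rconv γ lam) ∧
    (∀ lam : ℝ, 0 < Rconv γ lam) ∧
    StrictAntiOn (Rconv γ) (Set.Ioi 0) ∧
    Filter.Tendsto (Rconv γ) Filter.atTop (nhds 0) := by
  obtain ⟨hγ0, hγ2⟩ := hγ
  have hπ := Real.pi_pos
  have hγπ : γ < Real.pi := by linarith
  have hc0 : 0 < 1 - γ / Real.pi := by
    have : γ / Real.pi < 1 := (div_lt_one hπ).mpr hγπ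
    linarith
  have hc1 : 1 - γ / Real.pi ≤ 1 := by
    have : 0 < γ / Real.pi := div_pos hγ0 hπ
    linarith
  have hγ'0 : 0 < γ / 2 / (1 - γ / Real.pi) := div_pos (by linarith) hc0
  have hγ'2 : γ / 2 / (1 - γ / Real.pi) < Real.pi / 2 := by
    rw [div_lt_iff₀ hc0]
    have e : Real.pi / 2 * (1 - γ / Real.pi) = Real.pi / 2 - γ / 2 := by
      field_simp
    rw [e]
    linarith
  set f : ℝ → ℝ := fun μ => K (μ / (1 - γ / Real.pi)) (γ / 2 / (1 - γ / Real.pi)) with hf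
  set g : ℝ → ℝ := fun t => (Real.cosh (Real.pi * t / γ))⁻¹ with hg
  obtain ⟨hfc, hfe, hfm, hfp, hfi⟩ :=
    Kf_props (1 - γ / Real.pi) (γ / 2 / (1 - γ / Real.pi)) hc0 hc1 hγ'0 hγ'2
  have hgc : Continuous g := by
    refine (Real.continuous_cosh.comp (by fun_prop)).inv₀ (fun t => ?_)
    exact (Real.cosh_pos _).ne'
  have hge : ∀ x : ℝ, g (-x) = g x := by
    intro x
    simp only [hg, mul_neg, neg_div, Real.cosh_neg]
  have hgm : ∀ x y : ℝ, |x| < |y| → g y < g x := by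
    intro x y h
    have hxy : |Real.pi * x / γ| < |Real.pi * y / γ| := by
      rw [abs_div, abs_div, abs_mul, abs_mul, abs_of_pos hπ, abs_of_pos hγ0]
      apply div_lt_div_of_pos_right _ hγ0
      exact mul_lt_mul_of_pos_left h hπ
    have hcosh := Real.cosh_lt_cosh.mpr hxy
    simp only [hg]
    exact inv_strictAnti₀ (Real.cosh_pos _) hcosh
  have hgp : ∀ x : ℝ, 0 < g x := fun x => inv_pos.mpr (Real.cosh_pos _)
  have hg1 : ∀ x : ℝ, g x ≤ 1 := fun x => inv_le_one_of_one_le₀ (Real.one_le_cosh _)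
  have hg0 : Filter.Tendsto g atTop (nhds 0) := by
    have harg : Filter.Tendsto (fun t : ℝ => Real.pi * t / γ) atTop atTop := by
      apply Filter.Tendsto.atTop_div_const hγ0
      exact tendsto_id.const_mul_atTop hπ
    have hcosh : Filter.Tendsto (fun t : ℝ => Real.cosh (Real.pi * t / γ)) atTop atTop := by
      refine tendsto_atTop_mono (fun x => ?_)
        ((Real.tendsto_exp_atTop.comp harg).atTop_div_const two_pos)
      have := Real.exp_pos (-(Real.pi * x / γ))
      simp only [Function.comp, Real.cosh_eq]
      linarith
    exact hcosh.inv_tendsto_atTop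
  obtain ⟨heven, hpos, hanti, htend⟩ :=
    conv_aux f g hfc hgc hfe hge hfm hgm hfp hgp hg1 hfi hg0
  have hA : 0 < Real.pi / (2 * γ * (Real.pi - γ)) := by
    apply div_pos hπ
    nlinarith
  have hRe : ∀ lam : ℝ, Rconv γ lam =
      Real.pi / (2 * γ * (Real.pi - γ)) * ∫ μ : ℝ, f μ * g (lam - μ) := by
    intro lam
    simp only [Rconv, hf, hg, div_eq_mul_inv]
  refine ⟨?_, ?_, ?_, ?_⟩
  · intro lam
    rw [hRe, hRe, heven lam]
  · intro lam
    rw [hRe]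
    exact mul_pos hA (hpos lam)
  · intro a ha b hb hab
    simp only [Set.mem_Ioi] at ha hb
    rw [hRe, hRe]
    exact mul_lt_mul_of_pos_left (hanti a b ha hab) hA
  · have : Rconv γ = fun lam =>
        Real.pi / (2 * γ * (Real.pi - γ)) * ∫ μ : ℝ, f μ * g (lam - μ) := funext hRe
    rw [this]
    have := htend.const_mul (Real.pi / (2 * γ * (Real.pi - γ)))
    simpa using this
end

section
/- Suppose (for γ ∈ (0, π/2) and Q > 0) f: [−Q, Q] → ℝ is continuous and satisfies f(λ) + ∫_{−Q}^{Q} K(λ−μ|γ) f(μ) dμ = 1 for all λ ∈ [−Q, Q], where K(·|γ) > 0 and ∫_ℝ K(μ|γ)dμ = 1 − 2γ/π < 1. Then 0 < f(λ) < 1 for all λ ∈ [−Q, Q]. -/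
open MeasureTheory

theorem stmt_14 (γ Q : ℝ) (hγ : γ ∈ Set.Ioo 0 (Real.pi / 2)) (hQ : 0 < Q)
    (hKpos : ∀ lam : ℝ, 0 < K lam γ)
    (hKint : (∫ μ : ℝ, K μ γ) = 1 - 2 * γ / Real.pi)
    (hKlt : 1 - 2 * γ / Real.pi < 1)
    (f : ℝ → ℝ) (hf : ContinuousOn f (Set.Icc (-Q) Q))
    (heq : ∀ lam ∈ Set.Icc (-Q) Q,
      f lam + ∫ μ in Set.Icc (-Q) Q, K (lam - μ) γ * f μ = 1) :
    ∀ lam ∈ Set.Icc (-Q) Q, 0 < f lam ∧ f lam < 1 := by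
  obtain ⟨hγ0, hγπ⟩ := hγ
  have hπ : 0 < Real.pi := Real.pi_pos
  set c : ℝ := 1 - 2 * γ / Real.pi with hc
  have hc0 : 0 < c := by
    have : 2 * γ / Real.pi < 1 := by
      rw [div_lt_one hπ]; linarith
    show (0:ℝ) < 1 - 2 * γ / Real.pi
    linarith
  have hc1 : c < 1 := hKlt
  have hsin : 0 < Real.sin γ := Real.sin_pos_of_pos_of_lt_pi hγ0 (by linarith)
  have hKcont : Continuous fun lam => K lam γ := by
    unfold K
    fun_prop (disch := intro x; positivity)
  -- integrability of K on ℝ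
  have hKintg : Integrable (fun μ => K μ γ) := by
    by_contra h
    rw [integral_undef h] at hKint
    linarith
  set S : Set ℝ := Set.Icc (-Q) Q with hS
  have hScpt : IsCompact S := isCompact_Icc
  have hSne : S.Nonempty := Set.nonempty_Icc.2 (by linarith)
  -- I lam
  set I : ℝ → ℝ := fun lam => ∫ μ in S, K (lam - μ) γ with hIdef
  have hIKint : ∀ lam : ℝ, IntegrableOn (fun μ => K (lam - μ) γ) S := fun lam =>
    ((hKcont.comp (continuous_const.sub continuous_id)).continuousOn).integrableOn_compact hScpt
  have hIle : ∀ lam : ℝ, I lam ≤ c := by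
    intro lam
    have h1 : I lam ≤ ∫ μ : ℝ, K (lam - μ) γ :=
      setIntegral_le_integral (hKintg.comp_sub_left lam)
        (Filter.Eventually.of_forall fun μ => (hKpos _).le)
    have h2 : (∫ μ : ℝ, K (lam - μ) γ) = ∫ μ : ℝ, K μ γ :=
      integral_sub_left_eq_self (fun μ => K μ γ) volume lam
    rw [h2, hKint] at h1
    exact h1
  have hI0 : ∀ lam : ℝ, 0 ≤ I lam := fun lam =>
    setIntegral_nonneg measurableSet_Icc fun μ _ => (hKpos _).le
  have hIpos : ∀ lam : ℝ, 0 < I lam := by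
    intro lam
    obtain ⟨μ0, hμ0, hmin⟩ := hScpt.exists_isMinOn hSne
      ((hKcont.comp (continuous_const.sub continuous_id)).continuousOn)
    have hε : 0 < K (lam - μ0) γ := hKpos _
    have hvol : (volume S).toReal = 2 * Q := by
      rw [hS, Real.volume_Icc]
      rw [ENNReal.toReal_ofReal (by linarith)]
      ring
    have : (2 * Q) * K (lam - μ0) γ ≤ I lam := by
      have := setIntegral_mono_on (integrableOn_const (by
        rw [hS, Real.volume_Icc]; exact ENNReal.ofReal_lt_top.ne)) (hIKint lam)
        measurableSet_Icc (fun μ hμ => isMinOn_iff.1 hmin μ hμ)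
      rwa [setIntegral_const, smul_eq_mul, measureReal_def, hvol] at this
    nlinarith
  -- integrability of K * f on S
  have hKfint : ∀ lam : ℝ, IntegrableOn (fun μ => K (lam - μ) γ * f μ) S :=
    fun lam => (((hKcont.comp (continuous_const.sub continuous_id)).continuousOn).mul hf).integrableOn_compact hScpt
  -- min and max of f
  obtain ⟨a, ha, hmina⟩ := hScpt.exists_isMinOn hSne hf
  obtain ⟨b, hb, hmaxb⟩ := hScpt.exists_isMaxOn hSne hf
  set m : ℝ := f a with hm
  set M : ℝ := f b with hM
  have hfm : ∀ μ ∈ S, m ≤ f μ := fun μ hμ => isMinOn_iff.1 hmina μ hμ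
  have hfM : ∀ μ ∈ S, f μ ≤ M := fun μ hμ => isMaxOn_iff.1 hmaxb μ hμ
  -- bounds on ∫ K f
  have hlow : ∀ lam : ℝ, m * I lam ≤ ∫ μ in S, K (lam - μ) γ * f μ := by
    intro lam
    have mono := setIntegral_mono_on ((hIKint lam).mul_const m) (hKfint lam) measurableSet_Icc
      (fun μ hμ => mul_le_mul_of_nonneg_left (hfm μ hμ) (hKpos (lam - μ)).le)
    have e1 : (∫ μ in S, K (lam - μ) γ * m) = (∫ μ in S, K (lam - μ) γ) * m :=
      integral_mul_const _ _
    have e2 : I lam = ∫ μ in S, K (lam - μ) γ := rfl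
    rw [e2]
    nlinarith [mono, e1]
  have hhigh : ∀ lam : ℝ, (∫ μ in S, K (lam - μ) γ * f μ) ≤ M * I lam := by
    intro lam
    have mono := setIntegral_mono_on (hKfint lam) ((hIKint lam).mul_const M) measurableSet_Icc
      (fun μ hμ => mul_le_mul_of_nonneg_left (hfM μ hμ) (hKpos (lam - μ)).le)
    have e1 : (∫ μ in S, K (lam - μ) γ * M) = (∫ μ in S, K (lam - μ) γ) * M :=
      integral_mul_const _ _
    have e2 : I lam = ∫ μ in S, K (lam - μ) γ := rfl
    rw [e2]
    nlinarith [mono, e1]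
  -- m > 0
  have heqa := heq a ha
  have heqb := heq b hb
  have hm1 : m ≥ 1 - M * I a := by have := hhigh a; linarith
  have hM1 : M ≤ 1 - m * I b := by have := hlow b; linarith
  have hmpos : 0 < m := by
    by_contra h
    push_neg at h
    rcases le_or_gt M 0 with hM0 | hM0
    · have : M * I a ≤ 0 := mul_nonpos_of_nonpos_of_nonneg hM0 (hI0 a)
      linarith
    · have h1 : M * I a ≤ M * c := mul_le_mul_of_nonneg_left (hIle a) hM0.le
      have h2 : m * c ≤ m * I b := by
        have := mul_le_mul_of_nonpos_left (hIle b) h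
        linarith
      have h3 : m ≥ 1 - M * c := by linarith
      have h4 : M ≤ 1 - m * c := by linarith
      nlinarith
  intro lam hlam
  refine ⟨lt_of_lt_of_le hmpos (hfm lam hlam), ?_⟩
  have := heq lam hlam
  have hl := hlow lam
  have : f lam ≤ 1 - m * I lam := by linarith
  nlinarith [hIpos lam]
end

section
/- Suppose γ ∈ (π/2, π), Q > 0, and f: [−Q, Q] → ℝ is continuous with f(λ) + ∫_{−Q}^{Q} K(λ−μ|γ) f(μ) dμ = 1 for all λ ∈ [−Q, Q], where K(·|γ) < 0 on ℝ and ∫_ℝ |K(μ|γ)| dμ = 2γ/π − 1 < 1. Then 1 < f(λ) < 1/(2(1 − γ/π)) = π/(2(π−γ)) for all λ ∈ [−Q, Q]. -/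
open MeasureTheory

theorem stmt_15 (γ Q : ℝ) (hγ : γ ∈ Set.Ioo (Real.pi / 2) Real.pi) (hQ : 0 < Q)
    (hKneg : ∀ lam : ℝ, K lam γ < 0)
    (hKint : (∫ μ : ℝ, |K μ γ|) = 2 * γ / Real.pi - 1)
    (hKlt : 2 * γ / Real.pi - 1 < 1)
    (f : ℝ → ℝ) (hf : ContinuousOn f (Set.Icc (-Q) Q))
    (heq : ∀ lam ∈ Set.Icc (-Q) Q,
      f lam + ∫ μ in Set.Icc (-Q) Q, K (lam - μ) γ * f μ = 1) :
    ∀ lam ∈ Set.Icc (-Q) Q,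
      1 < f lam ∧ f lam < 1 / (2 * (1 - γ / Real.pi)) := by
  obtain ⟨hγ1, hγ2⟩ := hγ
  have hπ := Real.pi_pos
  set c : ℝ := 2 * γ / Real.pi - 1 with hc
  have hc0 : 0 < c := by
    rw [hc, sub_pos, lt_div_iff₀ hπ]; linarith
  have hc1 : c < 1 := hKlt
  set s : Set ℝ := Set.Icc (-Q) Q with hs
  have hcompact : IsCompact s := isCompact_Icc
  have hne : s.Nonempty := ⟨0, by constructor <;> linarith⟩
  have hmeas : MeasurableSet s := measurableSet_Icc
  -- integrability of |K|
  have hKintg : Integrable (fun μ => |K μ γ|) := by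
    by_contra h
    rw [integral_undef h] at hKint
    have : (0:ℝ) < 2 * γ / Real.pi - 1 := by rw [← hc]; exact hc0
    linarith
  have habs : ∀ x : ℝ, |K x γ| = -K x γ := fun x => abs_of_neg (hKneg x)
  have hKi2 : ∀ lam : ℝ, Integrable (fun μ => |K (lam - μ) γ|) := fun lam =>
    hKintg.comp_sub_left lam
  -- a lam := ∫_{s} |K (lam - μ)| satisfies 0 < a lam < c
  have ha_pos : ∀ lam : ℝ, 0 < ∫ μ in s, |K (lam - μ) γ| := by
    intro lam
    rw [setIntegral_pos_iff_support_of_nonneg_ae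
      (Filter.Eventually.of_forall fun μ => abs_nonneg _) (hKi2 lam).integrableOn]
    have hsupp : Function.support (fun μ => |K (lam - μ) γ|) = Set.univ := by
      ext μ
      simp only [Function.mem_support, Set.mem_univ, iff_true, ne_eq, abs_eq_zero]
      exact (hKneg _).ne
    rw [hsupp, Set.univ_inter, hs, Real.volume_Icc]
    rw [show Q - (-Q) = 2 * Q by ring]
    exact ENNReal.ofReal_pos.mpr (by linarith)
  have ha_lt : ∀ lam : ℝ, (∫ μ in s, |K (lam - μ) γ|) < c := by
    intro lam
    have htot : (∫ μ : ℝ, |K (lam - μ) γ|) = c := by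
      rw [← hKint]
      exact integral_sub_left_eq_self (fun x => |K x γ|) volume lam
    have hsplit := integral_add_compl hmeas (hKi2 lam)
    have hposc : 0 < ∫ μ in sᶜ, |K (lam - μ) γ| := by
      rw [setIntegral_pos_iff_support_of_nonneg_ae
        (Filter.Eventually.of_forall fun μ => abs_nonneg _)
        ((hKi2 lam).integrableOn)]
      have hsupp : Function.support (fun μ => |K (lam - μ) γ|) = Set.univ := by
        ext μ
        simp only [Function.mem_support, Set.mem_univ, iff_true, ne_eq, abs_eq_zero]
        exact (hKneg _).ne
      rw [hsupp, Set.univ_inter]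
      have hsub : Set.Ioi Q ⊆ sᶜ := by
        intro x hx
        simp only [hs, Set.mem_compl_iff, Set.mem_Icc, not_and, not_le]
        intro _
        exact hx
      calc (0 : ENNReal) < volume (Set.Ioi Q) := by simp [Real.volume_Ioi]
        _ ≤ volume sᶜ := measure_mono hsub
    linarith [hsplit, htot, hposc]
  -- bound on f
  obtain ⟨C, hC⟩ := hcompact.exists_bound_of_continuousOn hf
  have hfmeas : AEStronglyMeasurable f (volume.restrict s) :=
    hf.aestronglyMeasurable hmeas
  have hKf_int : ∀ lam : ℝ, IntegrableOn (fun μ => f μ * |K (lam - μ) γ|) s := by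
    intro lam
    refine Integrable.bdd_mul (c := C) (hKi2 lam).integrableOn hfmeas ?_
    filter_upwards [ae_restrict_mem hmeas] with x hx
    exact hC x hx
  -- rewrite equation
  have hfe : ∀ lam ∈ s, f lam = 1 + ∫ μ in s, f μ * |K (lam - μ) γ| := by
    intro lam hlam
    have h := heq lam hlam
    have hrw : (∫ μ in s, K (lam - μ) γ * f μ)
        = -∫ μ in s, f μ * |K (lam - μ) γ| := by
      rw [← integral_neg]
      congr 1
      funext μ
      rw [habs]; ring
    rw [hrw] at h
    linarith
  -- min and max
  obtain ⟨x0, hx0, hmin⟩ := hcompact.exists_isMinOn hne hf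
  obtain ⟨x1, hx1, hmax⟩ := hcompact.exists_isMaxOn hne hf
  set m := f x0 with hm
  set M := f x1 with hM
  have hmle : ∀ x ∈ s, m ≤ f x := fun x hx => hmin hx
  have hMge : ∀ x ∈ s, f x ≤ M := fun x hx => hmax hx
  -- lower bound: m ≥ 1 + m * a₀
  have hlow : m ≥ 1 + m * ∫ μ in s, |K (x0 - μ) γ| := by
    have h1 := hfe x0 hx0
    have h2 : (∫ μ in s, m * |K (x0 - μ) γ|)
        ≤ ∫ μ in s, f μ * |K (x0 - μ) γ| := by
      refine setIntegral_mono_on (((hKi2 x0).integrableOn).const_mul m)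
        (hKf_int x0) hmeas ?_
      intro x hx
      exact mul_le_mul_of_nonneg_right (hmle x hx) (abs_nonneg _)
    have h3 : (∫ μ in s, m * |K (x0 - μ) γ|) = m * ∫ μ in s, |K (x0 - μ) γ| :=
      integral_const_mul m _
    linarith [h1, h2, h3]
  have ha0pos := ha_pos x0
  have ha0lt := ha_lt x0
  have hm1 : 1 < m := by
    set a := ∫ μ in s, |K (x0 - μ) γ|
    nlinarith [mul_pos ha0pos (sub_pos.mpr (show (1:ℝ) < 2 from one_lt_two))]
  -- upper bound
  have hhigh : M ≤ 1 + M * ∫ μ in s, |K (x1 - μ) γ| := by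
    have h1 := hfe x1 hx1
    have h2 : (∫ μ in s, f μ * |K (x1 - μ) γ|)
        ≤ ∫ μ in s, M * |K (x1 - μ) γ| := by
      refine setIntegral_mono_on (hKf_int x1)
        (((hKi2 x1).integrableOn).const_mul M) hmeas ?_
      intro x hx
      exact mul_le_mul_of_nonneg_right (hMge x hx) (abs_nonneg _)
    have h3 : (∫ μ in s, M * |K (x1 - μ) γ|) = M * ∫ μ in s, |K (x1 - μ) γ| :=
      integral_const_mul M _
    linarith [h1, h2, h3]
  have hM0 : 0 < M := by
    have : m ≤ M := hmle x1 hx1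
    linarith
  have ha1lt := ha_lt x1
  have ha1pos := ha_pos x1
  have hMlt : M < 1 / (1 - c) := by
    have hstep : M < 1 + M * c := by
      have : M * ∫ μ in s, |K (x1 - μ) γ| < M * c :=
        mul_lt_mul_of_pos_left ha1lt hM0
      linarith
    rw [lt_div_iff₀ (by linarith : (0:ℝ) < 1 - c)]
    nlinarith
  have hrw : 1 / (1 - c) = 1 / (2 * (1 - γ / Real.pi)) := by
    congr 1
    rw [hc]
    field_simp
    ring
  intro lam hlam
  constructor
  · exact lt_of_lt_of_le hm1 (hmle lam hlam)
  · calc f lam ≤ M := hMge lam hlam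
      _ < 1 / (1 - c) := hMlt
      _ = _ := hrw
end
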